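/- Radial Sobolev inequality: there exists a constant C > 0 depending only on d ≥ 3 such that for every radial function φ ∈ Ḣ¹(ℝ^d), sup_{x≠0} |x|^{d/2−1} |φ(x)| ≤ C ‖∇φ‖_{L²(ℝ^d)}. -/

import Mathlib

open MeasureTheory Real
noncomputable section
abbrev Rd (d : ℕ) := EuclideanSpace ℝ (Fin d)
/-- critical Sobolev exponent 2* = 2d/(d-2) -/
def pstar (d : ℕ) : ℝ := 2*d/((d:ℝ)-2)
/-- Aubin–Talenti ground state -/
def W (d : ℕ) (x : Rd d) : ℝ := (1 + ‖x‖^2 / ((d:ℝ)*((d:ℝ)-2))) ^ (((2:ℝ)-d)/2)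
/-- squared homogeneous H^1 norm -/
def gradSq (d : ℕ) (φ : Rd d → ℝ) : ℝ := ∫ x, ‖gradient φ x‖^2
/-- L^{2*} norm to the power 2* -/
def lpP (d : ℕ) (φ : Rd d → ℝ) : ℝ := ∫ x, |φ x| ^ pstar d
/-- virial functional K -/
def Kf (d : ℕ) (φ : Rd d → ℝ) : ℝ := gradSq d φ - lpP d φ
/-- static energy J -/
def Jf (d : ℕ) (φ : Rd d → ℝ) : ℝ := (1/2) * gradSq d φ - (1/(pstar d)) * lpP d φ
/-- Laplacian as sum of second partial derivatives -/
def lap (d : ℕ) (f : Rd d → ℝ) (x : Rd d) : ℝ :=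
  ∑ i : Fin d, fderiv ℝ (fun y => fderiv ℝ f y (EuclideanSpace.single i 1)) x (EuclideanSpace.single i 1)
/-- H^1-invariant dilation T_λ φ(x) = λ^{d/2-1} φ(λ x) -/
def Tdil (d : ℕ) (lam : ℝ) (φ : Rd d → ℝ) (x : Rd d) : ℝ := lam ^ ((d:ℝ)/2 - 1) * φ (lam • x)

/-!
Restricted to a ray, a radial `φ` is its profile `f r = φ (r • e)`, and `|f' ‖y‖| ≤ ‖∇φ y‖`, so
polar coordinates give `d |B₁| ∫₀^∞ r^(d-1) f'(r)² dr ≤ ‖∇φ‖₂²`. As `f → 0` at infinity,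
`f s = -∫ₛ^∞ f'`, and Cauchy–Schwarz with the weight `r^(d-1)` yields
`|f s|² ≤ (∫ₛ^∞ r^(d-1) f'²) (∫ₛ^∞ r^(1-d)) = (∫ₛ^∞ r^(d-1) f'²) s^(2-d) / (d-2)`.
Cauchy–Schwarz comes from integrating the pointwise AM–GM bound
`|f'| ≤ (ε r^(d-1) f'² + r^(1-d) / ε) / 2` and optimising over `ε`.
-/

open Filter Set Metric Topology Module

theorem le_sqrt_mul_sqrt_of_forall_le_amgm {L A c : ℝ} (hA : 0 ≤ A) (hc : 0 ≤ c)
    (h : ∀ ε > 0, L ≤ (ε * A + c / ε) / 2) : L ≤ √A * √c := by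
  have hle : ∀ δ > 0, L ≤ √(A + δ) * √(c + δ) := by
    intro δ hδ
    have ha : 0 < √(A + δ) := sqrt_pos.2 (by linarith)
    have hb : 0 < √(c + δ) := sqrt_pos.2 (by linarith)
    have ha2 := sq_sqrt (show 0 ≤ A + δ by linarith)
    have hb2 := sq_sqrt (show 0 ≤ c + δ by linarith)
    -- `ε = √(c+δ)/√(A+δ)` balances the two terms once `A, c` are enlarged to `A+δ, c+δ`
    refine (h _ (div_pos hb ha)).trans ?_
    rw [div_div_eq_mul_div, div_mul_eq_mul_div, div_le_iff₀ two_pos]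
    have h1 : √(c + δ) * A / √(A + δ) ≤ √(c + δ) * √(A + δ) := by
      rw [div_le_iff₀ ha]; nlinarith
    have h2 : c * √(A + δ) / √(c + δ) ≤ √(c + δ) * √(A + δ) := by
      rw [div_le_iff₀ hb]; nlinarith
    linarith
  have hcont : Tendsto (fun δ : ℝ => √(A + δ) * √(c + δ)) (𝓝[>] 0) (𝓝 (√A * √c)) := by
    have : Continuous (fun δ : ℝ => √(A + δ) * √(c + δ)) := by fun_prop
    simpa using this.continuousWithinAt.tendsto (x := 0) (s := Ioi 0)
  exact ge_of_tendsto hcont (eventually_nhdsWithin_of_forall hle)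

theorem le_mul_sq_add_inv_div_two {q : ℝ} (hq : 0 < q) (a : ℝ) : a ≤ (q * a ^ 2 + q⁻¹) / 2 := by
  have : 0 ≤ q⁻¹ * (q * a - 1) ^ 2 := by positivity
  have e : q⁻¹ * (q * a - 1) ^ 2 = q * a ^ 2 - 2 * a + q⁻¹ := by field_simp; ring
  linarith

theorem abs_le_integral_weight_mul_deriv_sq {f w : ℝ → ℝ} {s ε : ℝ} (hε : 0 < ε)
    (hf : ∀ t ∈ Ici s, DifferentiableAt ℝ f t) (hlim : Tendsto f atTop (𝓝 0))
    (hw : ∀ t ∈ Ioi s, 0 < w t) (hwf : IntegrableOn (fun t => w t * deriv f t ^ 2) (Ioi s))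
    (hw_inv : IntegrableOn (fun t => (w t)⁻¹) (Ioi s)) :
    |f s| ≤ (ε * (∫ t in Ioi s, w t * deriv f t ^ 2) + (∫ t in Ioi s, (w t)⁻¹) / ε) / 2 := by
  set bound : ℝ → ℝ := fun t => (ε * (w t * deriv f t ^ 2) + (w t)⁻¹ / ε) / 2
  have hbound : ∀ t ∈ Ioi s, |deriv f t| ≤ bound t := by
    intro t ht
    have hq := mul_pos hε (hw t ht)
    convert le_mul_sq_add_inv_div_two hq |deriv f t| using 2
    rw [sq_abs, mul_inv, mul_comm (ε⁻¹)]; ring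
  have hbound_int : IntegrableOn bound (Ioi s) :=
    ((hwf.const_mul ε).add (hw_inv.div_const ε)).div_const 2
  have hderiv_int : IntegrableOn (deriv f) (Ioi s) :=
    hbound_int.mono' (measurable_deriv f).aestronglyMeasurable
      ((ae_restrict_mem measurableSet_Ioi).mono hbound)
  have hftc : ∫ t in Ioi s, deriv f t = -f s := by
    rw [integral_Ioi_of_hasDerivAt_of_tendsto' (fun t ht => (hf t ht).hasDerivAt)
      hderiv_int hlim, zero_sub]
  calc |f s| = |∫ t in Ioi s, deriv f t| := by rw [hftc, abs_neg]
    _ ≤ ∫ t in Ioi s, |deriv f t| := abs_integral_le_integral_abs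
    _ ≤ ∫ t in Ioi s, bound t :=
      setIntegral_mono_on hderiv_int.abs hbound_int measurableSet_Ioi hbound
    _ = _ := by
      rw [integral_div, integral_add (hwf.const_mul ε) (hw_inv.div_const ε), integral_const_mul,
        integral_div]

theorem abs_le_sqrt_integral_weight_mul_deriv_sq {f w : ℝ → ℝ} {s : ℝ}
    (hf : ∀ t ∈ Ici s, DifferentiableAt ℝ f t) (hlim : Tendsto f atTop (𝓝 0))
    (hw : ∀ t ∈ Ioi s, 0 < w t) (hwf : IntegrableOn (fun t => w t * deriv f t ^ 2) (Ioi s))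
    (hw_inv : IntegrableOn (fun t => (w t)⁻¹) (Ioi s)) :
    |f s| ≤ √(∫ t in Ioi s, w t * deriv f t ^ 2) * √(∫ t in Ioi s, (w t)⁻¹) :=
  le_sqrt_mul_sqrt_of_forall_le_amgm
    (setIntegral_nonneg measurableSet_Ioi fun t ht => mul_nonneg (hw t ht).le (sq_nonneg _))
    (setIntegral_nonneg measurableSet_Ioi fun t ht => (inv_pos.2 (hw t ht)).le)
    fun _ hε => abs_le_integral_weight_mul_deriv_sq hε hf hlim hw hwf hw_inv

theorem inv_pow_sub_one_eq_rpow {t : ℝ} (ht : 0 < t) {n : ℕ} (hn : 1 ≤ n) :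
    (t ^ (n - 1))⁻¹ = t ^ ((1 : ℝ) - n) := by
  rw [← rpow_natCast, ← rpow_neg ht.le, Nat.cast_sub hn]
  ring_nf

theorem rpow_mul_abs_le_sqrt_integral_pow_mul_deriv_sq {f : ℝ → ℝ} {n : ℕ} (hn : 2 < n)
    {s : ℝ} (hs : 0 < s) (hf : ∀ t ∈ Ici s, DifferentiableAt ℝ f t)
    (hlim : Tendsto f atTop (𝓝 0))
    (hint : IntegrableOn (fun t => t ^ (n - 1) * deriv f t ^ 2) (Ioi s)) :
    s ^ ((n : ℝ) / 2 - 1) * |f s| ≤ √(∫ t in Ioi s, t ^ (n - 1) * deriv f t ^ 2) / √(n - 2) := by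
  have hn' : (2 : ℝ) < n := by exact_mod_cast hn
  have hinv : EqOn (fun t : ℝ => (t ^ (n - 1))⁻¹) (fun t => t ^ ((1 : ℝ) - n)) (Ioi s) :=
    fun t ht => inv_pow_sub_one_eq_rpow (hs.trans ht) (by omega)
  have hint_inv : IntegrableOn (fun t : ℝ => (t ^ (n - 1))⁻¹) (Ioi s) :=
    (integrableOn_Ioi_rpow_of_lt (by linarith) hs).congr_fun hinv.symm measurableSet_Ioi
  have hval : ∫ t in Ioi s, (t ^ (n - 1))⁻¹ = s ^ ((2 : ℝ) - n) / (n - 2) := by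
    rw [setIntegral_congr_fun measurableSet_Ioi hinv, integral_Ioi_rpow_of_lt (by linarith) hs,
      show (1 : ℝ) - n + 1 = 2 - n by ring, neg_div, ← div_neg, neg_sub]
  have hcancel : s ^ ((n : ℝ) / 2 - 1) * √(s ^ ((2 : ℝ) - n)) = 1 := by
    rw [sqrt_eq_rpow, ← rpow_mul hs.le, ← rpow_add hs]
    ring_nf
    exact rpow_zero s
  have key := abs_le_sqrt_integral_weight_mul_deriv_sq hf hlim
    (fun t ht => pow_pos (hs.trans ht) _) hint hint_inv
  rw [hval, sqrt_div' _ (by linarith : (0:ℝ) ≤ n - 2)] at key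
  calc s ^ ((n : ℝ) / 2 - 1) * |f s|
      ≤ s ^ ((n : ℝ) / 2 - 1) * (√(∫ t in Ioi s, t ^ (n - 1) * deriv f t ^ 2) *
          (√(s ^ ((2 : ℝ) - n)) / √(n - 2))) := by gcongr
    _ = √(∫ t in Ioi s, t ^ (n - 1) * deriv f t ^ 2) / √(n - 2) *
          (s ^ ((n : ℝ) / 2 - 1) * √(s ^ ((2 : ℝ) - n))) := by ring
    _ = _ := by rw [hcancel, mul_one]

section Radial

variable {E : Type*} [NormedAddCommGroup E] [InnerProductSpace ℝ E] [CompleteSpace E]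

def radialProfile (φ : E → ℝ) (e : E) (r : ℝ) : ℝ := φ (r • e)

theorem hasDerivAt_radialProfile {φ : E → ℝ} (hrad : ∀ x y : E, ‖x‖ = ‖y‖ → φ x = φ y)
    {e y : E} (he : ‖e‖ = 1) (hy : y ≠ 0) (hφ : DifferentiableAt ℝ φ y) :
    HasDerivAt (radialProfile φ e) (inner ℝ (gradient φ y) (‖y‖⁻¹ • y)) ‖y‖ := by
  have hy' : ‖y‖ ≠ 0 := norm_ne_zero_iff.2 hy
  set u := ‖y‖⁻¹ • y
  have hu : ‖u‖ = 1 := norm_smul_inv_norm hy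
  have hprofile : radialProfile φ e = fun r => φ (r • u) := by
    funext r
    exact hrad _ _ (by rw [norm_smul, norm_smul, he, hu])
  have hyu : y = ‖y‖ • u := by rw [smul_smul, mul_inv_cancel₀ hy', one_smul]
  have hline : HasDerivAt (fun r : ℝ => r • u) u ‖y‖ := by
    simpa using (hasDerivAt_id ‖y‖).smul_const u
  rw [hprofile, ← InnerProductSpace.toDual_apply_apply, toDual_gradient]
  exact hφ.hasFDerivAt.comp_hasDerivAt_of_eq ‖y‖ hline hyu

theorem abs_deriv_radialProfile_le {φ : E → ℝ} (hrad : ∀ x y : E, ‖x‖ = ‖y‖ → φ x = φ y)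
    {e y : E} (he : ‖e‖ = 1) (hy : y ≠ 0) (hφ : DifferentiableAt ℝ φ y) :
    |deriv (radialProfile φ e) ‖y‖| ≤ ‖gradient φ y‖ := by
  rw [(hasDerivAt_radialProfile hrad he hy hφ).deriv]
  calc |inner ℝ (gradient φ y) (‖y‖⁻¹ • y)| ≤ ‖gradient φ y‖ * ‖‖y‖⁻¹ • y‖ :=
        abs_real_inner_le_norm _ _
    _ = ‖gradient φ y‖ := by rw [show ‖‖y‖⁻¹ • y‖ = 1 from norm_smul_inv_norm hy, mul_one]

end Radial

section Polar

variable {E : Type*} [NormedAddCommGroup E] [InnerProductSpace ℝ E] [FiniteDimensional ℝ E]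
  [MeasurableSpace E] [BorelSpace E] [Nontrivial E] (μ : Measure E) [μ.IsAddHaarMeasure]
  {φ : E → ℝ} {e : E}

theorem ae_deriv_radialProfile_sq_le (hrad : ∀ x y : E, ‖x‖ = ‖y‖ → φ x = φ y)
    (hφ : Differentiable ℝ φ) (he : ‖e‖ = 1) :
    ∀ᵐ x ∂μ, deriv (radialProfile φ e) ‖x‖ ^ 2 ≤ ‖gradient φ x‖ ^ 2 := by
  filter_upwards [compl_mem_ae_iff.2 (measure_singleton (μ := μ) 0)] with x hx
  rw [← sq_abs]
  exact pow_le_pow_left₀ (abs_nonneg _) (abs_deriv_radialProfile_le hrad he hx (hφ x)) 2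

theorem integrable_deriv_radialProfile_sq (hrad : ∀ x y : E, ‖x‖ = ‖y‖ → φ x = φ y)
    (hφ : Differentiable ℝ φ) (he : ‖e‖ = 1)
    (hint : Integrable (fun x => ‖gradient φ x‖ ^ 2) μ) :
    Integrable (fun x => deriv (radialProfile φ e) ‖x‖ ^ 2) μ := by
  refine hint.mono'
    ((measurable_deriv _).pow_const 2 |>.comp measurable_norm).aestronglyMeasurable ?_
  filter_upwards [ae_deriv_radialProfile_sq_le μ hrad hφ he] with x hx
  rwa [Real.norm_of_nonneg (sq_nonneg _)]

theorem integrableOn_pow_mul_deriv_radialProfile_sq (hrad : ∀ x y : E, ‖x‖ = ‖y‖ → φ x = φ y)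
    (hφ : Differentiable ℝ φ) (he : ‖e‖ = 1)
    (hint : Integrable (fun x => ‖gradient φ x‖ ^ 2) μ) :
    IntegrableOn (fun r => r ^ (finrank ℝ E - 1) * deriv (radialProfile φ e) r ^ 2)
      (Ioi 0) := by
  simpa only [smul_eq_mul] using
    (integrable_fun_norm_addHaar μ (f := fun r => deriv (radialProfile φ e) r ^ 2)).1
      (integrable_deriv_radialProfile_sq μ hrad hφ he hint)

theorem finrank_mul_measureReal_ball_mul_integral_le (hrad : ∀ x y : E, ‖x‖ = ‖y‖ → φ x = φ y)
    (hφ : Differentiable ℝ φ) (he : ‖e‖ = 1)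
    (hint : Integrable (fun x => ‖gradient φ x‖ ^ 2) μ) :
    finrank ℝ E * μ.real (ball 0 1) *
        ∫ r in Ioi 0, r ^ (finrank ℝ E - 1) * deriv (radialProfile φ e) r ^ 2 ≤
      ∫ x, ‖gradient φ x‖ ^ 2 ∂μ := by
  have hpolar := integral_fun_norm_addHaar μ (fun r => deriv (radialProfile φ e) r ^ 2)
  simp only [nsmul_eq_mul, smul_eq_mul] at hpolar
  rw [← mul_assoc] at hpolar
  rw [← hpolar]
  exact integral_mono_ae (integrable_deriv_radialProfile_sq μ hrad hφ he hint) hint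
    (ae_deriv_radialProfile_sq_le μ hrad hφ he)

end Polar

theorem measureReal_ball_pos {X : Type*} [PseudoMetricSpace X] [ProperSpace X]
    [MeasurableSpace X] (μ : Measure X) [μ.IsOpenPosMeasure] [IsFiniteMeasureOnCompacts μ]
    (x : X) {r : ℝ} (hr : 0 < r) : 0 < μ.real (ball x r) :=
  ENNReal.toReal_pos (measure_ball_pos μ x hr).ne' measure_ball_lt_top.ne

theorem tendsto_smul_const_atTop_cocompact {E : Type*} [NormedAddCommGroup E] [NormedSpace ℝ E]
    [ProperSpace E] {e : E} (he : e ≠ 0) :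
    Tendsto (fun r : ℝ => r • e) atTop (cocompact E) := by
  rw [← cobounded_eq_cocompact, ← tendsto_norm_atTop_iff_cobounded]
  simpa only [norm_smul, Real.norm_eq_abs] using
    tendsto_abs_atTop_atTop.atTop_mul_const (norm_pos_iff.2 he)

theorem rpow_norm_mul_abs_le_sqrt_integral_norm_gradient_sq {E : Type*} [NormedAddCommGroup E]
    [InnerProductSpace ℝ E] [FiniteDimensional ℝ E] [MeasurableSpace E] [BorelSpace E]
    (μ : Measure E) [μ.IsAddHaarMeasure] (hn : 2 < finrank ℝ E) {φ : E → ℝ}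
    (hrad : ∀ x y : E, ‖x‖ = ‖y‖ → φ x = φ y) (hφ : Differentiable ℝ φ)
    (hint : Integrable (fun x => ‖gradient φ x‖ ^ 2) μ) (hlim : Tendsto φ (cocompact E) (𝓝 0))
    {x : E} (hx : x ≠ 0) :
    ‖x‖ ^ ((finrank ℝ E : ℝ) / 2 - 1) * |φ x| ≤
      √(∫ x, ‖gradient φ x‖ ^ 2 ∂μ) / √((finrank ℝ E - 2) * (finrank ℝ E * μ.real (ball 0 1))) := by
  have : Nontrivial E := nontrivial_of_finrank_pos (R := ℝ) (by omega)
  have hn' : (2 : ℝ) < finrank ℝ E := by exact_mod_cast hn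
  have hv : 0 < μ.real (ball 0 1) := measureReal_ball_pos μ 0 one_pos
  obtain ⟨e, he⟩ := exists_norm_eq E zero_le_one
  have hs : 0 < ‖x‖ := norm_pos_iff.2 hx
  have hint₀ := integrableOn_pow_mul_deriv_radialProfile_sq μ hrad hφ he hint
  have htail : ∫ t in Ioi ‖x‖, t ^ (finrank ℝ E - 1) * deriv (radialProfile φ e) t ^ 2 ≤
      ∫ t in Ioi 0, t ^ (finrank ℝ E - 1) * deriv (radialProfile φ e) t ^ 2 :=
    setIntegral_mono_set hint₀
      ((ae_restrict_mem measurableSet_Ioi).mono fun t ht =>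
        mul_nonneg (pow_nonneg (le_of_lt ht) _) (sq_nonneg _))
      (Ioi_subset_Ioi hs.le).eventuallyLE
  have henergy := finrank_mul_measureReal_ball_mul_integral_le μ hrad hφ he hint
  rw [hrad x (‖x‖ • e) (by rw [norm_smul, he, mul_one, norm_norm])]
  calc _ ≤ _ := rpow_mul_abs_le_sqrt_integral_pow_mul_deriv_sq (f := radialProfile φ e) hn hs
        (fun t _ => (hφ.comp (differentiable_id.smul_const e)).differentiableAt)
        (hlim.comp (tendsto_smul_const_atTop_cocompact (norm_pos_iff.1 (he ▸ one_pos))))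
        (hint₀.mono_set (Ioi_subset_Ioi hs.le))
    _ ≤ √((∫ x, ‖gradient φ x‖ ^ 2 ∂μ) / (finrank ℝ E * μ.real (ball 0 1))) /
          √(finrank ℝ E - 2) := by
      gcongr
      rw [le_div_iff₀ (by positivity)]
      linarith [mul_le_mul_of_nonneg_right htail
        (by positivity : (0 : ℝ) ≤ finrank ℝ E * μ.real (ball 0 1))]
    _ = _ := by
      rw [sqrt_div' _ (by positivity), sqrt_mul (by linarith) (finrank ℝ E * μ.real (ball 0 1))]
      ring

theorem stmt_5 (d : ℕ) (hd : 3 ≤ d) :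
    ∃ C > 0, ∀ φ : Rd d → ℝ,
      (∀ x y : Rd d, ‖x‖ = ‖y‖ → φ x = φ y) →
      Differentiable ℝ φ →
      Integrable (fun x => ‖gradient φ x‖^2) →
      Filter.Tendsto φ (Filter.cocompact (Rd d)) (nhds 0) →
      ∀ x : Rd d, x ≠ 0 → ‖x‖ ^ ((d:ℝ)/2 - 1) * |φ x| ≤ C * Real.sqrt (gradSq d φ) := by
  have hd2 : (2 : ℝ) < d := by exact_mod_cast hd
  have hv := measureReal_ball_pos (volume : Measure (Rd d)) 0 one_pos
  refine ⟨1 / √((d - 2) * (d * (volume : Measure (Rd d)).real (ball 0 1))), by positivity,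
    fun φ hrad hφ hint hlim x hx => ?_⟩
  have h := rpow_norm_mul_abs_le_sqrt_integral_norm_gradient_sq volume
    (by rw [finrank_euclideanSpace_fin]; omega) hrad hφ hint hlim hx
  rw [finrank_euclideanSpace_fin] at h
  rwa [one_div_mul_eq_div]
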